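/- arXiv:2210.14410 — 5 statements merged into one kernel-verified Lean document; each statement's English description precedes it below -/
import Mathlib

section
/- Let L ≥ 1 and let d₀, d₁, …, d_L be positive integers, W_i a real d_i×d_{i−1} matrix and b_i ∈ ℝ^{d_i} for i = 1, …, L. Define the network by z₀(x) = x, z_i(x) = ReLU(W_i z_{i−1}(x) + b_i) for 1 ≤ i ≤ L−1, and z_L(x) = W_L z_{L−1}(x) + b_L. Fix x₀ ∈ ℝ^{d₀} and ε ≥ 0, and define bounds recursively by z̲₀ = x₀ − ε𝟙, z̄₀ = x₀ + ε𝟙, and for 1 ≤ i ≤ L−1, with m_i = (z̄_{i−1} + z̲_{i−1})/2 and r_i = (z̄_{i−1} − z̲_{i−1})/2, z̄_i = ReLU(W_i m_i + b_i + |W_i| r_i) and z̲_i = ReLU(W_i m_i + b_i − |W_i| r_i), and z̄_L = W_L m_L + b_L + |W_L| r_L, z̲_L = W_L m_L + b_L − |W_L| r_L. Then for every x ∈ ℝ^{d₀} with ‖x − x₀‖_∞ ≤ ε and every 0 ≤ i ≤ L, we have z̲_i ≤ z_i(x) ≤ z̄_i componentwise. -/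
open Matrix Finset

lemma ibp_affine_key {n m : ℕ} (A : Matrix (Fin m) (Fin n) ℝ) (v l u : Fin n → ℝ)
    (h : ∀ k, l k ≤ v k ∧ v k ≤ u k) (j : Fin m) :
    A.mulVec (fun k => (u k + l k) / 2) j
      - (Matrix.of fun j' k => |A j' k|).mulVec (fun k => (u k - l k) / 2) j
      ≤ A.mulVec v j ∧
    A.mulVec v j ≤ A.mulVec (fun k => (u k + l k) / 2) j
      + (Matrix.of fun j' k => |A j' k|).mulVec (fun k => (u k - l k) / 2) j := by
  have habs : |A.mulVec v j - A.mulVec (fun k => (u k + l k) / 2) j|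
      ≤ (Matrix.of fun j' k => |A j' k|).mulVec (fun k => (u k - l k) / 2) j := by
    simp only [Matrix.mulVec, dotProduct, Matrix.of_apply, ← Finset.sum_sub_distrib]
    refine (Finset.abs_sum_le_sum_abs _ _).trans (Finset.sum_le_sum fun k _ => ?_)
    rw [← mul_sub, abs_mul]
    exact mul_le_mul_of_nonneg_left
      (by rw [abs_le]; constructor <;> [linarith [(h k).1]; linarith [(h k).2]]) (abs_nonneg _)
  rw [abs_le] at habs
  constructor <;> linarith [habs.1, habs.2]

/-- Hidden-layer outputs of the ReLU network: `netHidden d W b x i` is `z_i(x)` for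
`0 ≤ i ≤ L−1` (ReLU applied at every hidden layer). Here `W i : d i → d (i+1)`
corresponds to the paper's `W_{i+1}`. -/
noncomputable def netHidden (d : ℕ → ℕ)
    (W : ∀ i : ℕ, Matrix (Fin (d (i + 1))) (Fin (d i)) ℝ)
    (b : ∀ i : ℕ, Fin (d (i + 1)) → ℝ)
    (x : Fin (d 0) → ℝ) : ∀ i : ℕ, Fin (d i) → ℝ
  | 0 => x
  | (i + 1) => fun j => max (((W i).mulVec (netHidden d W b x i) + b i) j) 0

/-- IBP bounds: `(ibpBounds d W b x₀ ε i).1` and `.2` are the lower and upper bounds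
`z̲_i` and `z̄_i` of the IBP recursion for the hidden layers `0 ≤ i ≤ L−1`. -/
noncomputable def ibpBounds (d : ℕ → ℕ)
    (W : ∀ i : ℕ, Matrix (Fin (d (i + 1))) (Fin (d i)) ℝ)
    (b : ∀ i : ℕ, Fin (d (i + 1)) → ℝ)
    (x₀ : Fin (d 0) → ℝ) (ε : ℝ) : ∀ i : ℕ, (Fin (d i) → ℝ) × (Fin (d i) → ℝ)
  | 0 => (fun j => x₀ j - ε, fun j => x₀ j + ε)
  | (i + 1) =>
      (fun j => max ((W i).mulVec
            (fun k => ((ibpBounds d W b x₀ ε i).2 k + (ibpBounds d W b x₀ ε i).1 k) / 2) j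
          + b i j
          - (Matrix.of fun j' k => |W i j' k|).mulVec
            (fun k => ((ibpBounds d W b x₀ ε i).2 k - (ibpBounds d W b x₀ ε i).1 k) / 2) j) 0,
       fun j => max ((W i).mulVec
            (fun k => ((ibpBounds d W b x₀ ε i).2 k + (ibpBounds d W b x₀ ε i).1 k) / 2) j
          + b i j
          + (Matrix.of fun j' k => |W i j' k|).mulVec
            (fun k => ((ibpBounds d W b x₀ ε i).2 k - (ibpBounds d W b x₀ ε i).1 k) / 2) j) 0)

/-- Soundness of the full IBP recursion for an `(L'+1)`-layer network
(`L = L' + 1 ≥ 1`): every layer output over the ℓ∞-ball of radius `ε` around `x₀` lies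
in the IBP box, for the hidden layers `0 ≤ i ≤ L−1 = L'` as well as for the final
affine-only layer `i = L`. -/
theorem ibp_recursion_sound
    (L' : ℕ) (d : ℕ → ℕ) (hd : ∀ i ≤ L' + 1, 0 < d i)
    (W : ∀ i : ℕ, Matrix (Fin (d (i + 1))) (Fin (d i)) ℝ)
    (b : ∀ i : ℕ, Fin (d (i + 1)) → ℝ)
    (x₀ : Fin (d 0) → ℝ) (ε : ℝ) (hε : 0 ≤ ε)
    (x : Fin (d 0) → ℝ) (hx : ∀ j, |x j - x₀ j| ≤ ε) :
    (∀ i ≤ L', ∀ j,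
        (ibpBounds d W b x₀ ε i).1 j ≤ netHidden d W b x i j ∧
        netHidden d W b x i j ≤ (ibpBounds d W b x₀ ε i).2 j) ∧
    (∀ j : Fin (d (L' + 1)),
        (W L').mulVec
            (fun k => ((ibpBounds d W b x₀ ε L').2 k + (ibpBounds d W b x₀ ε L').1 k) / 2) j
          + b L' j
          - (Matrix.of fun j' k => |W L' j' k|).mulVec
            (fun k => ((ibpBounds d W b x₀ ε L').2 k - (ibpBounds d W b x₀ ε L').1 k) / 2) j
          ≤ ((W L').mulVec (netHidden d W b x L') + b L') j ∧
        ((W L').mulVec (netHidden d W b x L') + b L') j ≤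
          (W L').mulVec
            (fun k => ((ibpBounds d W b x₀ ε L').2 k + (ibpBounds d W b x₀ ε L').1 k) / 2) j
          + b L' j
          + (Matrix.of fun j' k => |W L' j' k|).mulVec
            (fun k => ((ibpBounds d W b x₀ ε L').2 k - (ibpBounds d W b x₀ ε L').1 k) / 2) j) := by
  have H : ∀ i : ℕ, ∀ j,
      (ibpBounds d W b x₀ ε i).1 j ≤ netHidden d W b x i j ∧
      netHidden d W b x i j ≤ (ibpBounds d W b x₀ ε i).2 j := by
    intro i
    induction i with
    | zero =>
        intro j
        have := abs_le.mp (hx j)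
        simp only [netHidden, ibpBounds]
        constructor <;> linarith [this.1, this.2]
    | succ i ih =>
        intro j
        have key := ibp_affine_key (W i) (netHidden d W b x i)
          (ibpBounds d W b x₀ ε i).1 (ibpBounds d W b x₀ ε i).2 ih j
        simp only [netHidden, ibpBounds, Pi.add_apply]
        constructor
        · exact max_le_max (by linarith [key.1]) le_rfl
        · exact max_le_max (by linarith [key.2]) le_rfl
  refine ⟨fun i _ => H i, fun j => ?_⟩
  have key := ibp_affine_key (W L') (netHidden d W b x L')
    (ibpBounds d W b x₀ ε L').1 (ibpBounds d W b x₀ ε L').2 (H L') j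
  simp only [Pi.add_apply]
  constructor <;> linarith [key.1, key.2]
end

section
/- Let K ≥ 1, M ≥ 1, and let the class index set be I = {1, …, K} ∪ {a₁, …, a_M}, with true label y ∈ {1, …, K} and a₀ := y. Let d ≥ 1, let A ⊆ ℝ^d be a set, and let l, u ∈ ℝ^d with l ≤ h ≤ u componentwise for all h ∈ A and l ≤ u. Let W be a real I×d matrix and b ∈ ℝ^I, and for η ∈ 𝒫 and k ∈ I set c_k(η) = Σ_{m=0}^{M} η_m (e_{a_m} − e_k). For each k ∈ I define J_k = min_{η ∈ 𝒫} max_{l ≤ w ≤ u} −c_k(η)ᵀ(W w + b). Then for every h ∈ A, writing z = W h + b, we have min_{0 ≤ m ≤ M} [ −log( exp(z_{a_m}) / ( exp(z_{a_m}) + Σ_{k ∈ {1,…,K}, k ≠ y} exp(z_k) ) ) ] ≤ −log( exp(J_y) / Σ_{k=1}^{K} exp(J_k) ). -/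
/-!
Let `z = W h + b` and let `t = z_{a_m}` be the largest of the logits of `y` and the abstain
classes. The robust-abstain loss is at most its value at that `a_m`, which is
`log (1 + ∑_{k ≠ y} exp (z_k - t))`. Since `h` lies in the box, the inner maximum defining `J_k` is
at least `z_k - ∑ η_m z_{a_m} ≥ z_k - t`, so `J_k ≥ z_k - t`; and `η = e₀` makes `c_y(η) = 0`
because `a₀ = y`, so `J_y ≤ 0`. The right-hand side equals `log (1 + ∑_{k ≠ y} exp (J_k - J_y))`,
and the cross-entropy is monotone in the margins.
-/

open Real

section CrossEntropy

variable {ι : Type*}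

lemma neg_log_exp_div_exp_add_sum_exp (T : Finset ι) (s : ℝ) (x : ι → ℝ) :
    -log (exp s / (exp s + ∑ k ∈ T, exp (x k))) = log (1 + ∑ k ∈ T, exp (x k - s)) := by
  rw [← log_inv, inv_div, add_div, div_self (exp_ne_zero s), Finset.sum_div]
  simp only [exp_sub]

lemma neg_log_exp_div_exp_add_sum_exp_le (T : Finset ι) {s r : ℝ} {x v : ι → ℝ}
    (h : ∀ k ∈ T, x k - s ≤ v k - r) :
    -log (exp s / (exp s + ∑ k ∈ T, exp (x k))) ≤
      -log (exp r / (exp r + ∑ k ∈ T, exp (v k))) := by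
  rw [neg_log_exp_div_exp_add_sum_exp, neg_log_exp_div_exp_add_sum_exp]
  gcongr log (1 + ∑ k ∈ T, ?_) with k hk
  exact exp_le_exp.mpr (h k hk)

end CrossEntropy

section Minimax

variable {α β : Type*} {S : Set α} {T : Set β} {g : α → β → ℝ}

noncomputable def minimaxValue (S : Set α) (T : Set β) (g : α → β → ℝ) : ℝ :=
  sInf ((fun η => sSup (g η '' T)) '' S)

lemma mem_lowerBounds_sSup_image {w : β} {r : ℝ} (hw : w ∈ T)
    (hbdd : ∀ η ∈ S, BddAbove (g η '' T)) (hr : ∀ η ∈ S, r ≤ g η w) :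
    r ∈ lowerBounds ((fun η => sSup (g η '' T)) '' S) := by
  rintro _ ⟨η, hη, rfl⟩
  exact (hr η hη).trans (le_csSup (hbdd η hη) (Set.mem_image_of_mem _ hw))

lemma le_minimaxValue {w : β} {r : ℝ} (hS : S.Nonempty) (hw : w ∈ T)
    (hbdd : ∀ η ∈ S, BddAbove (g η '' T)) (hr : ∀ η ∈ S, r ≤ g η w) :
    r ≤ minimaxValue S T g :=
  le_csInf (hS.image _) (mem_lowerBounds_sSup_image hw hbdd hr)

lemma minimaxValue_le {w : β} {η : α} {r : ℝ} (hw : w ∈ T)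
    (hbdd : ∀ η ∈ S, BddAbove (g η '' T)) (hbelow : BddBelow ((fun η => g η w) '' S))
    (hη : η ∈ S) (hle : ∀ w ∈ T, g η w ≤ r) :
    minimaxValue S T g ≤ r := by
  obtain ⟨r', hr'⟩ := hbelow
  have hbelow' : BddBelow ((fun η => sSup (g η '' T)) '' S) :=
    ⟨r', mem_lowerBounds_sSup_image hw hbdd fun η hη => hr' (Set.mem_image_of_mem _ hη)⟩
  refine (csInf_le hbelow' (Set.mem_image_of_mem _ hη)).trans ?_
  refine csSup_le ⟨_, Set.mem_image_of_mem _ hw⟩ ?_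
  rintro _ ⟨w, hw, rfl⟩
  exact hle w hw

end Minimax

section BoxMargin

variable {I ι n : Type*} [Fintype I] [DecidableEq I] [Fintype ι] [Fintype n]
  (W : Matrix I n ℝ) (b : I → ℝ) (a : ι → I) (l u : n → ℝ)

def marginObjective (k : I) (η : ι → ℝ) (w : n → ℝ) : ℝ :=
  -(∑ j, (∑ m, η m * ((if j = a m then (1 : ℝ) else 0) - (if j = k then (1 : ℝ) else 0))) *
    (W.mulVec w + b) j)

noncomputable def boxMargin (k : I) : ℝ :=
  minimaxValue (stdSimplex ℝ ι) (Set.Icc l u) (marginObjective W b a k)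

variable {W b a l u}

lemma marginObjective_eq {k : I} {η : ι → ℝ} (hη : ∑ m, η m = 1) (w : n → ℝ) :
    marginObjective W b a k η w = (W.mulVec w + b) k - ∑ m, η m * (W.mulVec w + b) (a m) := by
  simp only [marginObjective, Finset.sum_mul, mul_sub, sub_mul, Finset.sum_sub_distrib, mul_ite,
    ite_mul, mul_one, mul_zero, zero_mul]
  rw [Finset.sum_comm, Finset.sum_comm (f := fun j m => if j = k then η m * _ else 0)]
  simp [Finset.sum_ite_eq', ← Finset.sum_mul, hη]

lemma bddAbove_marginObjective_image_Icc (k : I) (η : ι → ℝ) :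
    BddAbove (marginObjective W b a k η '' Set.Icc l u) :=
  (isCompact_Icc.image (by unfold marginObjective; fun_prop)).bddAbove

lemma bddBelow_marginObjective_image_stdSimplex (k : I) (w : n → ℝ) :
    BddBelow ((fun η => marginObjective W b a k η w) '' stdSimplex ℝ ι) :=
  ((isCompact_stdSimplex ℝ ι).image (by unfold marginObjective; fun_prop)).bddBelow

lemma sub_le_boxMargin [Nonempty ι] {h : n → ℝ} (hh : h ∈ Set.Icc l u) {t : ℝ}
    (ht : ∀ m, (W.mulVec h + b) (a m) ≤ t) (k : I) :
    (W.mulVec h + b) k - t ≤ boxMargin W b a l u k := by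
  classical
  refine le_minimaxValue ⟨_, single_mem_stdSimplex ℝ (Classical.arbitrary ι)⟩ hh
    (fun η _ => bddAbove_marginObjective_image_Icc k η) fun η hη => ?_
  have hconv : ∑ m, η m * (W.mulVec h + b) (a m) ≤ t :=
    calc ∑ m, η m * (W.mulVec h + b) (a m) ≤ ∑ m, η m * t :=
          Finset.sum_le_sum fun m _ => mul_le_mul_of_nonneg_left (ht m) (hη.1 m)
      _ = t := by rw [← Finset.sum_mul, hη.2, one_mul]
  rw [marginObjective_eq hη.2]
  linarith

lemma boxMargin_le_zero (hlu : (Set.Icc l u).Nonempty) {k : I} {m₀ : ι} (hm₀ : a m₀ = k) :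
    boxMargin W b a l u k ≤ 0 := by
  classical
  obtain ⟨w, hw⟩ := hlu
  refine minimaxValue_le hw (fun η _ => bddAbove_marginObjective_image_Icc k η)
    (bddBelow_marginObjective_image_stdSimplex k w) (single_mem_stdSimplex ℝ m₀) fun w _ => ?_
  rw [marginObjective_eq (single_mem_stdSimplex ℝ m₀).2]
  simp [Pi.single_apply, hm₀]

end BoxMargin

theorem robust_abstain_loss_upper_bound_general
    (K M d : ℕ)
    (y : Fin K)
    (A : Set (Fin d → ℝ)) (l u : Fin d → ℝ)
    (hA : ∀ h ∈ A, ∀ j, l j ≤ h j ∧ h j ≤ u j)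
    (W : Matrix (Fin K ⊕ Fin M) (Fin d) ℝ) (b : (Fin K ⊕ Fin M) → ℝ)
    (a : Fin (M + 1) → Fin K ⊕ Fin M)
    (ha : a = fun m => Fin.cases (Sum.inl y) (fun i => Sum.inr i) m)
    (c : (Fin (M + 1) → ℝ) → (Fin K ⊕ Fin M) → (Fin K ⊕ Fin M) → ℝ)
    (hc : c = fun η k j => ∑ m, η m *
      ((if j = a m then (1 : ℝ) else 0) - (if j = k then (1 : ℝ) else 0)))
    (J : (Fin K ⊕ Fin M) → ℝ)
    (hJ : J = fun k => sInf {x : ℝ | ∃ η : Fin (M + 1) → ℝ,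
      (∀ m, 0 ≤ η m) ∧ (∑ m, η m) = 1 ∧
      x = sSup {s : ℝ | ∃ w : Fin d → ℝ, (∀ j, l j ≤ w j ∧ w j ≤ u j) ∧
        s = -(∑ j, c η k j * (W.mulVec w + b) j)}}) :
    ∀ h ∈ A,
      Finset.univ.inf' Finset.univ_nonempty (fun m : Fin (M + 1) =>
        -Real.log (Real.exp ((W.mulVec h + b) (a m)) /
          (Real.exp ((W.mulVec h + b) (a m)) +
            ∑ k ∈ Finset.univ.filter (fun k : Fin K => k ≠ y),
              Real.exp ((W.mulVec h + b) (Sum.inl k))))) ≤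
      -Real.log (Real.exp (J (Sum.inl y)) /
          ∑ k : Fin K, Real.exp (J (Sum.inl k))) := by
  intro h hh
  have hbox : h ∈ Set.Icc l u := by
    simpa only [Set.mem_Icc, Pi.le_def, forall_and] using hA h hh
  have hJ_eq : J = boxMargin W b a l u := by
    subst hJ hc
    funext k
    simp only [boxMargin, minimaxValue, marginObjective, Set.image, stdSimplex, Set.mem_Icc,
      Pi.le_def, Set.mem_ofPred_eq, forall_and, and_assoc, eq_comm]
  subst hJ_eq
  obtain ⟨m', -, hm'⟩ := Finset.univ.exists_max_image (fun m => (W.mulVec h + b) (a m))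
    Finset.univ_nonempty
  have hJy : boxMargin W b a l u (Sum.inl y) ≤ 0 :=
    boxMargin_le_zero ⟨h, hbox⟩ (m₀ := 0) (by rw [ha]; rfl)
  calc _ ≤ _ := Finset.inf'_le _ (Finset.mem_univ m')
    _ ≤ -log (exp (boxMargin W b a l u (Sum.inl y)) / (exp (boxMargin W b a l u (Sum.inl y)) +
          ∑ k ∈ Finset.univ.filter (· ≠ y), exp (boxMargin W b a l u (Sum.inl k)))) :=
        neg_log_exp_div_exp_add_sum_exp_le _ fun k _ => by
          linarith [sub_le_boxMargin hbox (fun m => hm' m (Finset.mem_univ m)) (Sum.inl k)]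
    _ = _ := by
        rw [Finset.filter_ne', Finset.add_sum_erase _
          (fun k => exp (boxMargin W b a l u (Sum.inl k))) (Finset.mem_univ y)]

/-- Theorem 2 of the paper: the robust-abstain loss — the minimum over
the true class `a₀ = y` and abstain classes `a₁, …, a_M` of the cross-entropy that
excludes the abstain classes from the denominator — is bounded by the loss
`ℓ_{xent\A₀}(J, y)` computed from the vector of box-relaxed worst-case margins `J_k`.
Classes are modeled as `Fin K ⊕ Fin M` (standard classes `Sum.inl`, abstain classes
`Sum.inr`). -/
theorem robust_abstain_loss_upper_bound
    (K M d : ℕ) (hK : 1 ≤ K) (hM : 1 ≤ M) (hd : 1 ≤ d)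
    (y : Fin K)
    (A : Set (Fin d → ℝ)) (l u : Fin d → ℝ)
    (hA : ∀ h ∈ A, ∀ j, l j ≤ h j ∧ h j ≤ u j) (hlu : ∀ j, l j ≤ u j)
    (W : Matrix (Fin K ⊕ Fin M) (Fin d) ℝ) (b : (Fin K ⊕ Fin M) → ℝ)
    (a : Fin (M + 1) → Fin K ⊕ Fin M)
    (ha : a = fun m => Fin.cases (Sum.inl y) (fun i => Sum.inr i) m)
    (c : (Fin (M + 1) → ℝ) → (Fin K ⊕ Fin M) → (Fin K ⊕ Fin M) → ℝ)
    (hc : c = fun η k j => ∑ m, η m *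
      ((if j = a m then (1 : ℝ) else 0) - (if j = k then (1 : ℝ) else 0)))
    (J : (Fin K ⊕ Fin M) → ℝ)
    (hJ : J = fun k => sInf {x : ℝ | ∃ η : Fin (M + 1) → ℝ,
      (∀ m, 0 ≤ η m) ∧ (∑ m, η m) = 1 ∧
      x = sSup {s : ℝ | ∃ w : Fin d → ℝ, (∀ j, l j ≤ w j ∧ w j ≤ u j) ∧
        s = -(∑ j, c η k j * (W.mulVec w + b) j)}}) :
    ∀ h ∈ A,
      Finset.univ.inf' Finset.univ_nonempty (fun m : Fin (M + 1) =>
        -Real.log (Real.exp ((W.mulVec h + b) (a m)) /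
          (Real.exp ((W.mulVec h + b) (a m)) +
            ∑ k ∈ Finset.univ.filter (fun k : Fin K => k ≠ y),
              Real.exp ((W.mulVec h + b) (Sum.inl k))))) ≤
      -Real.log (Real.exp (J (Sum.inl y)) /
          ∑ k : Fin K, Real.exp (J (Sum.inl k))) :=
  robust_abstain_loss_upper_bound_general K M d y A l u hA W b a ha c hc J hJ
end

section
/- Let K ≥ 1, M ≥ 1, and let the class index set be I = {1, …, K} ∪ {a₁, …, a_M}, with true label y ∈ {1, …, K} and a₀ := y. Let d ≥ 1, let A ⊆ ℝ^d be a set, and let l, u ∈ ℝ^d with l ≤ h ≤ u componentwise for all h ∈ A. Let W be a real I×d matrix and b ∈ ℝ^I, and for η ∈ 𝒫 and k ∈ I set c_k(η) = Σ_{m=0}^{M} η_m (e_{a_m} − e_k). For each k ∈ I define J_k = min_{η ∈ 𝒫} max_{l ≤ w ≤ u} −c_k(η)ᵀ(W w + b). Then for every h ∈ A, writing z = W h + b, and for every index i ∈ {0, …, M} such that z_{a_i} = max_{0 ≤ m ≤ M} z_{a_m}, we have z_k − z_{a_i} ≤ J_k for every k ∈ I. -/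
open Matrix Finset

/-- key logit-margin inequality in the proof of Theorem 2: for any
reachable feature `h ∈ A` with logits `z = Wh + b`, and any index `i` achieving the
maximum score among the true class `a₀ = y` and the abstain classes, every class `k`
satisfies `z_k − z_{a_i} ≤ J_k`. Classes are modeled as `Fin K ⊕ Fin M`. -/
theorem logit_margin_bound
    (K M d : ℕ) (hK : 1 ≤ K) (hM : 1 ≤ M) (hd : 1 ≤ d)
    (y : Fin K)
    (A : Set (Fin d → ℝ)) (l u : Fin d → ℝ)
    (hA : ∀ h ∈ A, ∀ j, l j ≤ h j ∧ h j ≤ u j)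
    (W : Matrix (Fin K ⊕ Fin M) (Fin d) ℝ) (b : (Fin K ⊕ Fin M) → ℝ)
    (a : Fin (M + 1) → Fin K ⊕ Fin M)
    (ha : a = fun m => Fin.cases (Sum.inl y) (fun i => Sum.inr i) m)
    (c : (Fin (M + 1) → ℝ) → (Fin K ⊕ Fin M) → (Fin K ⊕ Fin M) → ℝ)
    (hc : c = fun η k j => ∑ m, η m *
      ((if j = a m then (1 : ℝ) else 0) - (if j = k then (1 : ℝ) else 0)))
    (J : (Fin K ⊕ Fin M) → ℝ)
    (hJ : J = fun k => sInf {x : ℝ | ∃ η : Fin (M + 1) → ℝ,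
      (∀ m, 0 ≤ η m) ∧ (∑ m, η m) = 1 ∧
      x = sSup {s : ℝ | ∃ w : Fin d → ℝ, (∀ j, l j ≤ w j ∧ w j ≤ u j) ∧
        s = -(∑ j, c η k j * (W.mulVec w + b) j)}}) :
    ∀ h ∈ A, ∀ i : Fin (M + 1),
      (W.mulVec h + b) (a i) =
        Finset.univ.sup' Finset.univ_nonempty
          (fun m : Fin (M + 1) => (W.mulVec h + b) (a m)) →
      ∀ k : Fin K ⊕ Fin M,
        (W.mulVec h + b) k - (W.mulVec h + b) (a i) ≤ J k := by
  intro h hh i hi k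
  subst hJ
  set z : (Fin K ⊕ Fin M) → ℝ := W.mulVec h + b with hzdef
  have hmax : ∀ m : Fin (M + 1), z (a m) ≤ z (a i) := by
    intro m
    rw [hi]
    exact Finset.le_sup' (fun m => z (a m)) (Finset.mem_univ m)
  have hbox : ∀ j, l j ≤ h j ∧ h j ≤ u j := hA h hh
  -- inner set facts, for arbitrary η
  apply le_csInf
  · refine ⟨_, (fun m => if m = 0 then (1 : ℝ) else 0), ?_, ?_, rfl⟩
    · intro m; by_cases hm : m = 0 <;> simp [hm]
    · simp
  · rintro x ⟨η, hη0, hη1, rfl⟩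
    have hcz : ∑ j, c η k j * z j = ∑ m, η m * (z (a m) - z k) := by
      rw [hc]
      simp only [Finset.sum_mul]
      rw [Finset.sum_comm]
      refine Finset.sum_congr rfl fun m _ => ?_
      have : ∀ j, η m * ((if j = a m then (1:ℝ) else 0) - if j = k then 1 else 0) * z j
          = η m * ((if j = a m then z j else 0) - (if j = k then z j else 0)) := by
        intro j; split_ifs <;> ring
      simp only [this, ← Finset.mul_sum]
      rw [Finset.sum_sub_distrib, Finset.sum_ite_eq' Finset.univ (a m) z,
        Finset.sum_ite_eq' Finset.univ k z]
      simp
    -- boundedness of the inner set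
    have hbdd : BddAbove {s : ℝ | ∃ w : Fin d → ℝ, (∀ j, l j ≤ w j ∧ w j ≤ u j) ∧
        s = -(∑ j, c η k j * (W.mulVec w + b) j)} := by
      have hset : {s : ℝ | ∃ w : Fin d → ℝ, (∀ j, l j ≤ w j ∧ w j ≤ u j) ∧
          s = -(∑ j, c η k j * (W.mulVec w + b) j)}
          = (fun w : Fin d → ℝ => -(∑ j, c η k j * (W.mulVec w + b) j)) '' Set.Icc l u := by
        ext s
        constructor
        · rintro ⟨w, hw, rfl⟩
          exact ⟨w, ⟨fun j => (hw j).1, fun j => (hw j).2⟩, rfl⟩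
        · rintro ⟨w, hw, rfl⟩
          exact ⟨w, fun j => ⟨hw.1 j, hw.2 j⟩, rfl⟩
      rw [hset]
      refine (isCompact_Icc.image ?_).bddAbove
      refine Continuous.neg (continuous_finset_sum _ fun j _ => ?_)
      refine (continuous_const.mul ?_)
      simp only [Matrix.mulVec, dotProduct, Pi.add_apply]
      exact ((continuous_finset_sum _ fun p _ =>
        (continuous_const.mul (continuous_apply p))).add continuous_const)
    have hmem : (-(∑ j, c η k j * z j)) ∈ {s : ℝ | ∃ w : Fin d → ℝ,
        (∀ j, l j ≤ w j ∧ w j ≤ u j) ∧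
        s = -(∑ j, c η k j * (W.mulVec w + b) j)} := ⟨h, hbox, rfl⟩
    refine le_trans ?_ (le_csSup hbdd hmem)
    rw [hcz, ← Finset.sum_neg_distrib]
    have : z k - z (a i) = ∑ m : Fin (M + 1), η m * (z k - z (a i)) := by
      rw [← Finset.sum_mul, hη1, one_mul]
    rw [this]
    refine Finset.sum_le_sum fun m _ => ?_
    have := hmax m
    nlinarith [hη0 m]
end

section
/- For every t ∈ ℝ, define E₁(t) = (1/3)·∫_{t}^{∞} (1/2)e^{−|x|} dx + (2/3)·∫_{−∞}^{t} (1/4)( e^{−|x−10|} + e^{−|x+10|} ) dx. Then E₁(t) > 1/3 for every t ∈ ℝ. -/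
open MeasureTheory Set Real

noncomputable def lapG (t : ℝ) : ℝ := ∫ x in Set.Iic t, Real.exp (-|x|)

lemma lap_Iic0 : IntegrableOn (fun x : ℝ => Real.exp (-|x|)) (Iic 0) := by
  refine (integrableOn_exp_Iic 0).congr_fun (fun x hx => ?_) measurableSet_Iic
  rw [abs_of_nonpos hx, neg_neg]

lemma lap_Ioi0 : IntegrableOn (fun x : ℝ => Real.exp (-|x|)) (Ioi 0) := by
  have h : IntegrableOn (fun x : ℝ => Real.exp (-1 * x)) (Ioi 0) :=
    exp_neg_integrableOn_Ioi 0 one_pos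
  refine (h.congr_fun (fun x hx => ?_) measurableSet_Ioi)
  rw [abs_of_pos hx]; ring_nf

lemma lap_integrable : Integrable (fun x : ℝ => Real.exp (-|x|)) := by
  rw [← integrableOn_univ, ← Iic_union_Ioi (a := (0 : ℝ))]
  exact lap_Iic0.union lap_Ioi0

lemma lap_integrableOn_Iic (t : ℝ) :
    IntegrableOn (fun x : ℝ => Real.exp (-|x|)) (Iic t) :=
  lap_integrable.integrableOn

lemma lap_total : (∫ x : ℝ, Real.exp (-|x|)) = 2 := by
  rw [← intervalIntegral.integral_Iic_add_Ioi lap_Iic0 lap_Ioi0]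
  have h1 : (∫ x in Set.Iic (0 : ℝ), Real.exp (-|x|)) = 1 := by
    rw [setIntegral_congr_fun measurableSet_Iic
      (g := fun x : ℝ => Real.exp x) (fun x hx => by rw [abs_of_nonpos hx, neg_neg])]
    exact integral_exp_Iic_zero
  have h2 : (∫ x in Set.Ioi (0 : ℝ), Real.exp (-|x|)) = 1 := by
    rw [setIntegral_congr_fun measurableSet_Ioi
      (g := fun x : ℝ => Real.exp (-x)) (fun x hx => by rw [abs_of_pos hx])]
    exact integral_exp_neg_Ioi_zero
  rw [h1, h2]; norm_num

lemma lapG_mono : Monotone lapG := by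
  intro a b hab
  exact setIntegral_mono_set (lap_integrableOn_Iic b)
    (Filter.Eventually.of_forall fun x => (Real.exp_pos _).le)
    (HasSubset.Subset.eventuallyLE (Iic_subset_Iic.2 hab))

lemma lapG_pos (t : ℝ) : 0 < lapG t := by
  rw [lapG, setIntegral_pos_iff_support_of_nonneg_ae
    (Filter.Eventually.of_forall fun x => (Real.exp_pos _).le) (lap_integrableOn_Iic t)]
  have : (Function.support fun x : ℝ => Real.exp (-|x|)) = univ := by
    ext x; simp [Function.support, (Real.exp_pos _).ne']
  rw [this, univ_inter]
  simp

lemma lap_shift (t c : ℝ) :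
    (∫ x in Set.Iic t, Real.exp (-|x - c|)) = lapG (t - c) := by
  have h : ∀ x : ℝ, (Iic t).indicator (fun x => Real.exp (-|x - c|)) x
      = (Iic (t - c)).indicator (fun y => Real.exp (-|y|)) (x - c) := by
    intro x
    simp only [Set.indicator_apply, mem_Iic, sub_le_sub_iff_right]
  rw [lapG, ← integral_indicator measurableSet_Iic, ← integral_indicator measurableSet_Iic]
  simp_rw [h]
  exact integral_sub_right_eq_self ((Iic (t - c)).indicator fun y => Real.exp (-|y|)) c

/-- The misclassification rate of every single-abstain threshold
classifier exceeds `1/3`. -/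
theorem single_abstain_error_gt_third (t : ℝ) :
    (1 / 3 : ℝ) <
      (1 / 3) * (∫ x in Set.Ici t, (1 / 2) * Real.exp (-|x|)) +
      (2 / 3) * (∫ x in Set.Iic t,
        (1 / 4) * (Real.exp (-|x - 10|) + Real.exp (-|x + 10|))) := by
  have hIci : (∫ x in Set.Ici t, (1 / 2 : ℝ) * Real.exp (-|x|))
      = (1 / 2) * (2 - lapG t) := by
    have hsplit : lapG t + (∫ x in Set.Ioi t, Real.exp (-|x|)) = 2 := by
      rw [lapG, intervalIntegral.integral_Iic_add_Ioi (lap_integrableOn_Iic t)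
        lap_integrable.integrableOn, lap_total]
    have hIO : (∫ x in Set.Ici t, Real.exp (-|x|)) = ∫ x in Set.Ioi t, Real.exp (-|x|) :=
      (setIntegral_congr_set Ioi_ae_eq_Ici).symm
    rw [integral_const_mul, hIO]
    linarith
  have hIic : (∫ x in Set.Iic t,
        (1 / 4 : ℝ) * (Real.exp (-|x - 10|) + Real.exp (-|x + 10|)))
      = (1 / 4) * (lapG (t - 10) + lapG (t + 10)) := by
    rw [integral_const_mul]
    congr 1
    have h1 : IntegrableOn (fun x : ℝ => Real.exp (-|x - 10|)) (Iic t) :=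
      (lap_integrable.comp_sub_right 10).integrableOn
    have h2 : IntegrableOn (fun x : ℝ => Real.exp (-|x + 10|)) (Iic t) := by
      have := (lap_integrable.comp_sub_right (-10)).integrableOn (s := Iic t)
      simpa [sub_neg_eq_add] using this
    rw [integral_add h1 h2, lap_shift t 10]
    have := lap_shift t (-10)
    simp only [sub_neg_eq_add] at this
    rw [this]
  rw [hIci, hIic]
  have h1 : lapG t ≤ lapG (t + 10) := lapG_mono (by linarith)
  have h2 : 0 < lapG (t - 10) := lapG_pos _
  nlinarith
end

section
/- Define h : ℝ → ℝ by h(z) = (1/6)e^{−z} + 1/3 − (1/6)e^{−(z+10)} + (1/6)e^{z−10}. Then h is strictly convex on ℝ, it attains its unique global minimum at z* = (1/2)·log(e^{10} − 1), and 0 < 5 − z* < 1/1000. -/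
lemma deg_key (z : ℝ) :
    ((1 / 6) * Real.exp (-z) + 1 / 3 - (1 / 6) * Real.exp (-(z + 10)) +
        (1 / 6) * Real.exp (z - 10)) -
    ((1 / 6) * Real.exp (-((1 / 2) * Real.log (Real.exp 10 - 1))) + 1 / 3 -
        (1 / 6) * Real.exp (-((1 / 2) * Real.log (Real.exp 10 - 1) + 10)) +
        (1 / 6) * Real.exp ((1 / 2) * Real.log (Real.exp 10 - 1) - 10)) =
    (Real.exp z - Real.exp ((1 / 2) * Real.log (Real.exp 10 - 1)))^2 /
      (6 * Real.exp 10 * Real.exp z) := by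
  have hT : (11:ℝ) ≤ Real.exp 10 := by
    have := Real.add_one_le_exp (10:ℝ); linarith
  set zs := (1 / 2) * Real.log (Real.exp 10 - 1) with hzs
  have hE2 : Real.exp zs ^ 2 = Real.exp 10 - 1 := by
    rw [pow_two, ← Real.exp_add, hzs, show (1 / 2) * Real.log (Real.exp 10 - 1) +
      (1 / 2) * Real.log (Real.exp 10 - 1) = Real.log (Real.exp 10 - 1) by ring,
      Real.exp_log (by linarith)]
  have h1 : ∀ w : ℝ, Real.exp (-(w + 10)) = Real.exp (-w) * Real.exp (-10) := by
    intro w; rw [← Real.exp_add]; ring_nf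
  have h2 : ∀ w : ℝ, Real.exp (w - 10) = Real.exp w * Real.exp (-10) := by
    intro w; rw [← Real.exp_add]; ring_nf
  have h3 : ∀ w : ℝ, Real.exp (-w) = (Real.exp w)⁻¹ := fun w => Real.exp_neg w
  have h4 : Real.exp (-10 : ℝ) = (Real.exp 10)⁻¹ := Real.exp_neg 10
  simp only [h1, h2, h3]

  have hu : Real.exp z ≠ 0 := (Real.exp_pos z).ne'
  have hE : Real.exp zs ≠ 0 := (Real.exp_pos zs).ne'
  have hT0 : Real.exp 10 ≠ 0 := by positivity
  have hTval : Real.exp 10 = Real.exp zs ^ 2 + 1 := by linarith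
  rw [hTval]
  field_simp
  ring

lemma deg_exp10_big : (501:ℝ) < Real.exp 10 := by
  have h1 : (2.7:ℝ) < Real.exp 1 := by
    have := Real.exp_one_gt_d9; linarith
  have h2 : (2.7:ℝ)^(10:ℕ) < Real.exp 1 ^ (10:ℕ) :=
    pow_lt_pow_left₀ h1 (by norm_num) (by norm_num)
  have h3 : Real.exp 1 ^ (10:ℕ) = Real.exp 10 := by
    rw [← Real.exp_nat_mul]; norm_num
  nlinarith [h2, h3]



/-- The misclassification-rate function
`h(z) = (1/6)e^{−z} + 1/3 − (1/6)e^{−(z+10)} + (1/6)e^{z−10}` is strictly convex,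
attains its unique global minimum at `z* = (1/2)log(e^{10} − 1)`, and `z*` lies within
`1/1000` below `5`. -/
theorem degenerate_error_min :
    StrictConvexOn ℝ Set.univ (fun z : ℝ =>
      (1 / 6) * Real.exp (-z) + 1 / 3 - (1 / 6) * Real.exp (-(z + 10)) +
        (1 / 6) * Real.exp (z - 10)) ∧
    (∀ z : ℝ,
      (1 / 6) * Real.exp (-((1 / 2) * Real.log (Real.exp 10 - 1))) + 1 / 3 -
        (1 / 6) * Real.exp (-((1 / 2) * Real.log (Real.exp 10 - 1) + 10)) +
        (1 / 6) * Real.exp ((1 / 2) * Real.log (Real.exp 10 - 1) - 10) ≤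
      (1 / 6) * Real.exp (-z) + 1 / 3 - (1 / 6) * Real.exp (-(z + 10)) +
        (1 / 6) * Real.exp (z - 10)) ∧
    (∀ z : ℝ,
      (1 / 6) * Real.exp (-z) + 1 / 3 - (1 / 6) * Real.exp (-(z + 10)) +
        (1 / 6) * Real.exp (z - 10) =
      (1 / 6) * Real.exp (-((1 / 2) * Real.log (Real.exp 10 - 1))) + 1 / 3 -
        (1 / 6) * Real.exp (-((1 / 2) * Real.log (Real.exp 10 - 1) + 10)) +
        (1 / 6) * Real.exp ((1 / 2) * Real.log (Real.exp 10 - 1) - 10) →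
      z = (1 / 2) * Real.log (Real.exp 10 - 1)) ∧
    (0 < 5 - (1 / 2) * Real.log (Real.exp 10 - 1)) ∧
    (5 - (1 / 2) * Real.log (Real.exp 10 - 1) < 1 / 1000) := by
  have hT : (11:ℝ) ≤ Real.exp 10 := by
    have := Real.add_one_le_exp (10:ℝ); linarith
  refine ⟨?_, ?_, ?_, ?_, ?_⟩
  · -- strict convexity
    refine ⟨convex_univ, ?_⟩
    intro x _ y _ hxy a b ha hb hab
    simp only [smul_eq_mul]
    have h1 : ∀ w : ℝ, Real.exp (-(w + 10)) = Real.exp (-w) * Real.exp (-10) := by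
      intro w; rw [← Real.exp_add]; ring_nf
    have h2 : ∀ w : ℝ, Real.exp (w - 10) = Real.exp w * Real.exp (-10) := by
      intro w; rw [← Real.exp_add]; ring_nf
    simp only [h1, h2]
    have e1 : Real.exp (-(a * x + b * y)) = Real.exp (a * (-x) + b * (-y)) := by ring_nf
    have hc1 := strictConvexOn_exp.2 (Set.mem_univ (-x)) (Set.mem_univ (-y))
      (by intro h; exact hxy (by linarith [neg_injective h])) ha hb hab
    have hc2 := strictConvexOn_exp.2 (Set.mem_univ x) (Set.mem_univ y) hxy ha hb hab
    simp only [smul_eq_mul] at hc1 hc2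
    have hi0 : (0:ℝ) < Real.exp (-10) := Real.exp_pos _
    have hi1 : Real.exp (-10:ℝ) < 1 := by
      rw [Real.exp_lt_one_iff]; norm_num
    rw [e1]
    nlinarith [mul_lt_mul_of_pos_left hc1 (show (0:ℝ) < (1/6) * (1 - Real.exp (-10)) by nlinarith),
      mul_lt_mul_of_pos_left hc2 (show (0:ℝ) < (1/6) * Real.exp (-10) by nlinarith)]
  · intro z
    have hk := deg_key z
    have hpos : (0:ℝ) ≤ (Real.exp z - Real.exp ((1 / 2) * Real.log (Real.exp 10 - 1)))^2 /
      (6 * Real.exp 10 * Real.exp z) := by positivity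
    linarith
  · intro z hz
    have hk := deg_key z
    rw [hz, sub_self] at hk
    have hne : (6 * Real.exp 10 * Real.exp z) ≠ 0 := by positivity
    have h0 := (div_eq_zero_iff.mp hk.symm).resolve_right hne
    have := sub_eq_zero.mp (pow_eq_zero_iff (n := 2) (by norm_num) |>.mp h0)
    exact Real.exp_eq_exp.mp this
  · have hlt : Real.log (Real.exp 10 - 1) < 10 := by
      have := Real.log_lt_log (x := Real.exp 10 - 1) (by linarith) (by linarith)
      rwa [Real.log_exp] at this
    linarith
  · have h501 := deg_exp10_big
    have hexp : (501:ℝ)/500 ≤ Real.exp (1/500) := by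
      have := Real.add_one_le_exp ((1:ℝ)/500); linarith
    have hkey : Real.exp (10 - 1/500) < Real.exp 10 - 1 := by
      rw [Real.exp_sub, div_lt_iff₀ (Real.exp_pos _)]
      nlinarith
    have := (Real.lt_log_iff_exp_lt (show (0:ℝ) < Real.exp 10 - 1 by linarith)).mpr hkey
    linarith
end
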